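/- Lie–Trotter product formula: for square complex matrices A and B, the limit as n → ∞ of (exp(A/n) · exp(B/n))^n equals exp(A + B). In particular, for a Hamiltonian H = H₁ + H₂ and real t, lim_{n→∞} (exp(-itH₁/(2n)) exp(-itH₂/(2n)))^n = exp(-it(H₁+H₂)/2). -/

import Mathlib

/-!
Write `T = exp (A/n) exp (B/n)` and `S = exp ((A+B)/n)`, so that `Sⁿ = exp (A+B)`. Both have norm
at most `M = exp ((‖A‖+‖B‖)/n)`, and telescoping gives `‖Tⁿ - Sⁿ‖ ≤ n Mⁿ⁻¹ ‖T - S‖` with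
`Mⁿ⁻¹ ≤ exp (‖A‖+‖B‖)`. It remains that `n ‖T - S‖ → 0`, i.e. that
`s ↦ exp (s A) exp (s B) - exp (s (A+B))` is `o(s)` at `0`: it vanishes there together with its
derivative `A + B - (A + B)`.
-/

attribute [local instance] Matrix.linftyOpNormedAddCommGroup Matrix.linftyOpNormedRing
  Matrix.linftyOpNormedAlgebra

open NormedSpace Filter Topology

theorem norm_pow_succ_sub_pow_succ_le {R : Type*} [SeminormedRing R] {x y : R} {M : ℝ}
    (hx : ‖x‖ ≤ M) (hy : ‖y‖ ≤ M) (n : ℕ) :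
    ‖x ^ (n + 1) - y ^ (n + 1)‖ ≤ (n + 1) * M ^ n * ‖x - y‖ := by
  have hM : 0 ≤ M := (norm_nonneg x).trans hx
  induction n with
  | zero => simp
  | succ n ih =>
    have hxn : ‖x ^ (n + 1)‖ ≤ M ^ (n + 1) :=
      (norm_pow_le' x n.succ_pos).trans (pow_le_pow_left₀ (norm_nonneg x) hx _)
    calc ‖x ^ (n + 1 + 1) - y ^ (n + 1 + 1)‖
        = ‖x ^ (n + 1) * (x - y) + (x ^ (n + 1) - y ^ (n + 1)) * y‖ := by noncomm_ring
      _ ≤ M ^ (n + 1) * ‖x - y‖ + (n + 1) * M ^ n * ‖x - y‖ * M := by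
        grw [norm_add_le, norm_mul_le, norm_mul_le, hxn, ih, hy]
      _ = ((n + 1 : ℕ) + 1) * M ^ (n + 1) * ‖x - y‖ := by push_cast; ring

theorem NormedSpace.norm_exp_le_exp_norm (𝕂 : Type*) {𝔸 : Type*} [RCLike 𝕂] [NormedRing 𝔸]
    [NormedAlgebra 𝕂 𝔸] [NormOneClass 𝔸] (x : 𝔸) :
    ‖exp x‖ ≤ Real.exp ‖x‖ := by
  rw [exp_eq_tsum 𝕂, Real.exp_eq_exp_ℝ, exp_eq_tsum_div]
  refine (norm_tsum_le_tsum_norm (norm_expSeries_summable' x)).trans <|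
    Summable.tsum_le_tsum (fun k => ?_) (norm_expSeries_summable' x)
      (Real.summable_pow_div_factorial _)
  rw [norm_smul, norm_inv, RCLike.norm_natCast, div_eq_inv_mul]
  gcongr
  exact norm_pow_le x k

variable {𝕂 𝔸 : Type*} [RCLike 𝕂] [NormedRing 𝔸] [NormedAlgebra 𝕂 𝔸] [CompleteSpace 𝔸]

theorem NormedSpace.exp_inv_natCast_smul_pow {n : ℕ} (hn : n ≠ 0) (x : 𝔸) :
    exp ((n : 𝕂)⁻¹ • x) ^ n = exp x := by
  let _ : NormedAlgebra ℚ 𝔸 := NormedAlgebra.restrictScalars ℚ 𝕂 𝔸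
  rw [← exp_nsmul, ← Nat.cast_smul_eq_nsmul 𝕂, smul_smul,
    mul_inv_cancel₀ (Nat.cast_ne_zero.2 hn), one_smul]

theorem isLittleO_exp_smul_mul_exp_smul_sub_exp_smul_add (A B : 𝔸) :
    (fun s : 𝕂 => exp (s • A) * exp (s • B) - exp (s • (A + B))) =o[𝓝 0] id := by
  have hderiv : HasDerivAt (fun s : 𝕂 => exp (s • A) * exp (s • B) - exp (s • (A + B))) 0 0 := by
    refine (((hasDerivAt_exp_smul_const A (0 : 𝕂)).mul (hasDerivAt_exp_smul_const B 0)).sub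
      (hasDerivAt_exp_smul_const (A + B) 0)).congr_deriv ?_
    simp only [zero_smul, exp_zero, one_mul, mul_one, sub_self]
  have h := hasDerivAt_iff_isLittleO_nhds_zero.1 hderiv
  simp only [zero_add, zero_smul, exp_zero, mul_one, sub_self, sub_zero, smul_zero] at h
  exact h

variable [NormOneClass 𝔸]

theorem norm_exp_smul_mul_exp_smul_pow_sub_exp_add_le (A B : 𝔸) {m : ℕ} (hm : m ≠ 0) :
    ‖(exp ((m : 𝕂)⁻¹ • A) * exp ((m : 𝕂)⁻¹ • B)) ^ m - exp (A + B)‖ ≤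
      Real.exp (‖A‖ + ‖B‖) *
        ‖(m : 𝕂) • (exp ((m : 𝕂)⁻¹ • A) * exp ((m : 𝕂)⁻¹ • B) - exp ((m : 𝕂)⁻¹ • (A + B)))‖ := by
  set s : 𝕂 := (m : 𝕂)⁻¹
  set M := Real.exp ((‖A‖ + ‖B‖) / m)
  have norm_s_smul (x : 𝔸) : ‖s • x‖ = ‖x‖ / m := by
    rw [norm_smul, norm_inv, RCLike.norm_natCast, inv_mul_eq_div]
  have hT : ‖exp (s • A) * exp (s • B)‖ ≤ M := by
    grw [norm_mul_le, norm_exp_le_exp_norm 𝕂, norm_exp_le_exp_norm 𝕂, ← Real.exp_add,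
      norm_s_smul, norm_s_smul, ← add_div]
  have hS : ‖exp (s • (A + B))‖ ≤ M := by
    grw [norm_exp_le_exp_norm 𝕂, norm_s_smul, norm_add_le]
  obtain ⟨n, rfl⟩ := Nat.exists_eq_add_one_of_ne_zero hm
  have hMpow : M ^ n ≤ Real.exp (‖A‖ + ‖B‖) := by
    rw [← Real.exp_nat_mul, Real.exp_le_exp, mul_div_left_comm]
    exact mul_le_of_le_one_right (by positivity) ((div_le_one (by positivity)).2 (by simp))
  calc _ = ‖(exp (s • A) * exp (s • B)) ^ (n + 1) - exp (s • (A + B)) ^ (n + 1)‖ := by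
        rw [exp_inv_natCast_smul_pow hm]
    _ ≤ (n + 1) * M ^ n * ‖exp (s • A) * exp (s • B) - exp (s • (A + B))‖ :=
        norm_pow_succ_sub_pow_succ_le hT hS n
    _ = M ^ n * ‖((n + 1 : ℕ) : 𝕂) • (exp (s • A) * exp (s • B) - exp (s • (A + B)))‖ := by
        rw [norm_smul, RCLike.norm_natCast]; push_cast; ring
    _ ≤ _ := by gcongr

theorem lie_product_formula (A B : 𝔸) :
    Tendsto (fun n : ℕ => (exp ((n : 𝕂)⁻¹ • A) * exp ((n : 𝕂)⁻¹ • B)) ^ n) atTop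
      (𝓝 (exp (A + B))) := by
  have hdefect := ((isLittleO_exp_smul_mul_exp_smul_sub_exp_smul_add (𝕂 := 𝕂) A B).comp_tendsto
    tendsto_inv_atTop_nhds_zero_nat).tendsto_inv_smul_nhds_zero
  simp only [Function.comp_apply, id, inv_inv] at hdefect
  rw [tendsto_iff_norm_sub_tendsto_zero]
  refine squeeze_zero' (.of_forall fun _ => norm_nonneg _) ((eventually_ne_atTop 0).mono
    fun m hm => norm_exp_smul_mul_exp_smul_pow_sub_exp_add_le A B hm) ?_
  simpa using hdefect.norm.const_mul (Real.exp (‖A‖ + ‖B‖))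

/-- Lie–Trotter product formula: `(exp(A/n) exp(B/n))^n → exp(A + B)` as `n → ∞`; in
particular for `H = H₁ + H₂`,
`(exp(-itH₁/(2n)) exp(-itH₂/(2n)))^n → exp(-it(H₁+H₂)/2)`. -/
theorem lie_trotter (N : ℕ) :
    (∀ A B : Matrix (Fin N) (Fin N) ℂ,
      Tendsto (fun n : ℕ => (exp ((n : ℂ)⁻¹ • A) * exp ((n : ℂ)⁻¹ • B)) ^ n)
        atTop (nhds (exp (A + B)))) ∧
    (∀ (H₁ H₂ : Matrix (Fin N) (Fin N) ℂ) (t : ℝ),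
      Tendsto (fun n : ℕ =>
          (exp (((-Complex.I * t) / (2 * n)) • H₁) *
            exp (((-Complex.I * t) / (2 * n)) • H₂)) ^ n)
        atTop (nhds (exp (((-Complex.I * t) / 2) • (H₁ + H₂))))) := by
  have trotter (A B : Matrix (Fin N) (Fin N) ℂ) :
      Tendsto (fun n : ℕ => (exp ((n : ℂ)⁻¹ • A) * exp ((n : ℂ)⁻¹ • B)) ^ n)
        atTop (𝓝 (exp (A + B))) := by
    -- For `N = 0` the matrix ring is trivial, `‖1‖ = 0`, and `NormOneClass` fails.
    rcases isEmpty_or_nonempty (Fin N) with _ | _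
    · exact tendsto_const_nhds.congr fun _ => Subsingleton.elim _ _
    · exact lie_product_formula A B
  refine ⟨trotter, fun H₁ H₂ t => ?_⟩
  have hscale (n : ℕ) : (-Complex.I * t) / (2 * n) = (n : ℂ)⁻¹ * ((-Complex.I * t) / 2) := by
    ring
  simpa only [hscale, mul_smul, smul_add] using
    trotter (((-Complex.I * t) / 2) • H₁) (((-Complex.I * t) / 2) • H₂)
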